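/- Let M ∈ 𝓜_ln and ε ∈ (0,1). Suppose D ⊆ ℕ has asymptotic density zero and (J_d)_{d∈D} is a sequence of intervals with |J_d| ≤ ε^(ln(d+2)) for all d ∈ D. Then there exist E ⊆ ℕ disjoint from D and of asymptotic density zero and a sequence of intervals (J_e)_{e∈E} such that M ⊆ ⋃_{e∈E} J_e and |J_e| ≤ ε^(ln(e+2)) for every e ∈ E. -/

import Mathlib

open MeasureTheory Filter

/-- `S ⊆ ℝ` is an interval. -/
def IsIntervalSet (S : Set ℝ) : Prop := S.OrdConnected

/-- A set `M ⊆ ℝ` is microscopic if for each `ε > 0` there is a sequence of intervals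
`(J n)` covering `M` with `|J n| ≤ ε ^ (n + 1)` for each `n`. -/
def Microscopic (M : Set ℝ) : Prop :=
  ∀ ε : ℝ, 0 < ε → ∃ J : ℕ → Set ℝ,
    (∀ n, IsIntervalSet (J n)) ∧ M ⊆ (⋃ n, J n) ∧
      ∀ n, volume (J n) ≤ ENNReal.ofReal (ε ^ (n + 1))

/-- `A ⊆ ℕ` has asymptotic density zero. -/
def DensityZero (A : Set ℕ) : Prop :=
  Tendsto (fun j : ℕ => ((A ∩ Set.Iic j).ncard : ℝ) / ((j : ℝ) + 1)) atTop (nhds 0)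

/-- A set `M ⊆ ℝ` belongs to `𝓜_ln` if for every `ε > 0` there is a sequence of intervals
`(J n)` covering `M` with `|J n| ≤ ε ^ (ln (n + 2))`. -/
def MLn (M : Set ℝ) : Prop :=
  ∀ ε : ℝ, 0 < ε → ∃ J : ℕ → Set ℝ,
    (∀ n, IsIntervalSet (J n)) ∧ M ⊆ (⋃ n, J n) ∧
      ∀ n, volume (J n) ≤ ENNReal.ofReal (ε ^ Real.log ((n : ℝ) + 2))

/-- The property asked of the `n`-th pick. -/
def MlnProp (D : Set ℕ) (C n : ℕ) (U : Finset ℕ) (m : ℕ) : Prop :=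
  (m ∉ D ∧ m ∉ U) ∧ (n+2)^2 ≤ m ∧ m ≤ 2*(n+2)^2 + 2*C + 2*n

open Classical in
noncomputable def mlnPick (D : Set ℕ) (C n : ℕ) (U : Finset ℕ) : ℕ :=
  if h : ∃ m, MlnProp D C n U m then h.choose else 0

noncomputable def mlnUsed (D : Set ℕ) (C : ℕ) : ℕ → Finset ℕ
  | 0 => ∅
  | n+1 => insert (mlnPick D C n (mlnUsed D C n)) (mlnUsed D C n)

noncomputable def mlnF (D : Set ℕ) (C : ℕ) (n : ℕ) : ℕ := mlnPick D C n (mlnUsed D C n)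

lemma mln_exists (D : Set ℕ) (C : ℕ) (hC : ∀ j, 2 * (D ∩ Set.Iic j).ncard ≤ 2*C + j + 1)
    (n : ℕ) (U : Finset ℕ) (hU : U.card ≤ n) : ∃ m, MlnProp D C n U m := by
  classical
  set a := (n+2)^2 with ha
  set b := 2*(n+2)^2 + 2*C + 2*n with hb
  set T := (Finset.Icc a b).filter (fun m => m ∈ D) with hT
  have hTb : T.card ≤ 2*C + a + n := by
    have h1 : (T : Set ℕ) ⊆ D ∩ Set.Iic b := by
      intro m hm
      simp only [hT, Finset.coe_filter, Set.mem_setOf_eq, Finset.mem_Icc] at hm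
      exact ⟨hm.2, hm.1.2⟩
    have h2 : T.card ≤ (D ∩ Set.Iic b).ncard := by
      rw [← Set.ncard_coe_finset]
      exact Set.ncard_le_ncard h1 ((Set.finite_Iic b).inter_of_right D)
    have h3 := hC b
    omega
  have hIcc : (Finset.Icc a b).card = a + 2*C + 2*n + 1 := by
    rw [Nat.card_Icc]; omega
  have hpos : 0 < ((Finset.Icc a b) \ (T ∪ U)).card := by
    have h4 : (Finset.Icc a b).card - (T ∪ U).card ≤ ((Finset.Icc a b) \ (T ∪ U)).card :=
      Finset.le_card_sdiff _ _
    have h5 : (T ∪ U).card ≤ T.card + U.card := Finset.card_union_le _ _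
    omega
  obtain ⟨m, hm⟩ := Finset.card_pos.mp hpos
  rw [Finset.mem_sdiff, Finset.mem_union, Finset.mem_Icc] at hm
  refine ⟨m, ⟨⟨?_, fun h => hm.2 (Or.inr h)⟩, hm.1⟩⟩
  intro hmD
  exact hm.2 (Or.inl (Finset.mem_filter.mpr ⟨Finset.mem_Icc.mpr hm.1, hmD⟩))

lemma mlnUsed_card (D : Set ℕ) (C : ℕ) : ∀ n, (mlnUsed D C n).card ≤ n := by
  intro n
  induction n with
  | zero => simp [mlnUsed]
  | succ n ih =>
    calc (mlnUsed D C (n+1)).card ≤ (mlnUsed D C n).card + 1 := by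
          rw [mlnUsed]; exact Finset.card_insert_le _ _
      _ ≤ n + 1 := by omega

lemma mlnF_spec (D : Set ℕ) (C : ℕ) (hC : ∀ j, 2 * (D ∩ Set.Iic j).ncard ≤ 2*C + j + 1)
    (n : ℕ) : MlnProp D C n (mlnUsed D C n) (mlnF D C n) := by
  have h := mln_exists D C hC n (mlnUsed D C n) (mlnUsed_card D C n)
  simp only [mlnF, mlnPick, dif_pos h]
  exact h.choose_spec

lemma mlnF_mem_used (D : Set ℕ) (C : ℕ) {m n : ℕ} (h : m < n) :
    mlnF D C m ∈ mlnUsed D C n := by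
  induction n with
  | zero => omega
  | succ n ih =>
    rw [mlnUsed]
    rcases Nat.lt_succ_iff_lt_or_eq.mp h with h' | h'
    · exact Finset.mem_insert_of_mem (ih h')
    · subst h'; exact Finset.mem_insert_self _ _

lemma mln_key (C n : ℕ) : 2*(n+2)^2 + 2*C + 2*n + 2 ≤ (n+2)^(2*C+5) := by
  have h0 : C < 2^C := Nat.lt_two_pow_self (n := C)
  have h0' : 2^C ≤ 2^(2*C) := Nat.pow_le_pow_right (by norm_num) (by omega)
  have h1 : 2*C + 8 ≤ 2^(2*C+3) := by
    have : 2^(2*C+3) = 8 * 2^(2*C) := by ring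
    omega
  have h2 : 2^(2*C+3) ≤ (n+2)^(2*C+3) := Nat.pow_le_pow_left (by omega) _
  have h3 : (n+2)^(2*C+5) = (n+2)^(2*C+3) * (n+2)^2 := by rw [← pow_add]
  have h4 : n + 2 ≤ (n+2)^2 := by nlinarith
  nlinarith [sq_nonneg (n+2)]

theorem mln_lemma (M : Set ℝ) (hM : MLn M) (ε : ℝ) (hε : ε ∈ Set.Ioo (0 : ℝ) 1)
    (D : Set ℕ) (hD : DensityZero D) (J : ℕ → Set ℝ)
    (hJ : ∀ d ∈ D, IsIntervalSet (J d) ∧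
      volume (J d) ≤ ENNReal.ofReal (ε ^ Real.log ((d : ℝ) + 2))) :
    ∃ E : Set ℕ, Disjoint D E ∧ DensityZero E ∧ ∃ K : ℕ → Set ℝ,
      (∀ e ∈ E, IsIntervalSet (K e)) ∧ M ⊆ (⋃ e ∈ E, K e) ∧
        ∀ e ∈ E, volume (K e) ≤ ENNReal.ofReal (ε ^ Real.log ((e : ℝ) + 2)) := by
  classical
  obtain ⟨hε0, hε1⟩ := hε
  -- Step 1: a uniform count bound for D
  have hev : ∀ᶠ j in atTop, ((D ∩ Set.Iic j).ncard : ℝ) / ((j : ℝ) + 1) < 1/2 :=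
    hD.eventually_lt_const (by norm_num)
  obtain ⟨N, hN⟩ := eventually_atTop.mp hev
  set C := (D ∩ Set.Iic N).ncard with hCdef
  have hC : ∀ j, 2 * (D ∩ Set.Iic j).ncard ≤ 2*C + j + 1 := by
    intro j
    rcases le_or_gt N j with h | h
    · have h1 := hN j h
      have hj1 : (0:ℝ) < (j:ℝ) + 1 := by positivity
      rw [div_lt_iff₀ hj1] at h1
      have h2 : ((2 * (D ∩ Set.Iic j).ncard : ℕ) : ℝ) < ((j + 1 : ℕ) : ℝ) := by
        push_cast; linarith
      have h3 : 2 * (D ∩ Set.Iic j).ncard < j + 1 := Nat.cast_lt.mp h2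
      omega
    · have h1 : (D ∩ Set.Iic j).ncard ≤ C := by
        refine Set.ncard_le_ncard (fun x hx => ⟨hx.1, le_trans hx.2 h.le⟩) ?_
        exact (Set.finite_Iic N).inter_of_right D
      omega
  set f := mlnF D C with hf
  have hspec := mlnF_spec D C hC
  have hfD : ∀ n, f n ∉ D := fun n => (hspec n).1.1
  have hflb : ∀ n, (n+2)^2 ≤ f n := fun n => (hspec n).2.1
  have hfub : ∀ n, f n ≤ 2*(n+2)^2 + 2*C + 2*n := fun n => (hspec n).2.2
  have hfinj : Function.Injective f := by
    intro m n hmn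
    by_contra hne
    wlog hlt : m < n generalizing m n
    · exact this hmn.symm (Ne.symm hne) (by omega)
    · have hmem : f m ∈ mlnUsed D C n := mlnF_mem_used D C hlt
      rw [hmn] at hmem
      exact (hspec n).1.2 hmem
  set E := Set.range f with hE
  -- Disjointness
  have hdisj : Disjoint D E := by
    rw [Set.disjoint_right]
    rintro e ⟨n, rfl⟩
    exact hfD n
  -- Density zero of E
  have hEcount : ∀ j : ℕ, (E ∩ Set.Iic j).ncard ≤ Nat.sqrt j + 1 := by
    intro j
    have hsub : E ∩ Set.Iic j ⊆ f '' (Set.Iic (Nat.sqrt j)) := by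
      rintro e ⟨⟨n, rfl⟩, hej⟩
      refine ⟨n, ?_, rfl⟩
      have h1 : n * n ≤ j := by
        have := hflb n
        have : (n+2)^2 ≤ j := le_trans this hej
        nlinarith
      exact Nat.le_sqrt.mpr h1
    calc (E ∩ Set.Iic j).ncard ≤ (f '' (Set.Iic (Nat.sqrt j))).ncard := by
          refine Set.ncard_le_ncard hsub ?_
          exact ((Set.finite_Iic (Nat.sqrt j)).image f)
      _ ≤ (Set.Iic (Nat.sqrt j)).ncard := Set.ncard_image_le (Set.finite_Iic _)
      _ = Nat.sqrt j + 1 := by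
          rw [show (Set.Iic (Nat.sqrt j)) = ↑(Finset.Iic (Nat.sqrt j)) from
            (Finset.coe_Iic _).symm, Set.ncard_coe_finset, Nat.card_Iic]
  have hsqrt_atTop : Tendsto (fun j : ℕ => Nat.sqrt j) atTop atTop := by
    apply tendsto_atTop_atTop.mpr
    intro b
    exact ⟨b*b, fun j hj => Nat.le_sqrt.mpr hj⟩
  have hsq1 : Tendsto (fun j : ℕ => ((Nat.sqrt j : ℝ) + 1)) atTop atTop :=
    tendsto_atTop_add_const_right _ 1 (tendsto_natCast_atTop_atTop.comp hsqrt_atTop)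
  have hEdz : DensityZero E := by
    apply squeeze_zero (g := fun j : ℕ => 4 / ((Nat.sqrt j : ℝ) + 1))
    · intro j; positivity
    · intro j
      have h1 : ((E ∩ Set.Iic j).ncard : ℝ) ≤ (Nat.sqrt j : ℝ) + 1 := by
        exact_mod_cast hEcount j
      have h2n : (Nat.sqrt j + 1)^2 ≤ 4*(j+1) := by
        nlinarith [Nat.sqrt_le' j, Nat.sqrt_le_self j]
      have h2 : ((Nat.sqrt j : ℝ) + 1)^2 ≤ 4 * ((j:ℝ) + 1) := by exact_mod_cast h2n
      have hj : (0:ℝ) < (j:ℝ) + 1 := by positivity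
      have hs1 : (0:ℝ) < (Nat.sqrt j : ℝ) + 1 := by positivity
      rw [div_le_div_iff₀ hj hs1]
      have hnn : (0:ℝ) ≤ ((E ∩ Set.Iic j).ncard : ℝ) := Nat.cast_nonneg _
      nlinarith
    · exact Tendsto.div_atTop tendsto_const_nhds hsq1
  -- The cover
  set r := 2*C + 5 with hr
  obtain ⟨J', hJ'int, hJ'cov, hJ'vol⟩ := hM (ε ^ r) (pow_pos hε0 r)
  set K : ℕ → Set ℝ := fun m => J' (Function.invFun f m) with hK
  have hKf : ∀ n, K (f n) = J' n := by
    intro n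
    simp only [hK, Function.leftInverse_invFun hfinj n]
  refine ⟨E, hdisj, hEdz, K, ?_, ?_, ?_⟩
  · intro e _; exact hJ'int _
  · intro x hx
    obtain ⟨n, hn⟩ := Set.mem_iUnion.mp (hJ'cov hx)
    exact Set.mem_iUnion₂.mpr ⟨f n, ⟨n, rfl⟩, by rw [hKf n]; exact hn⟩
  · rintro e ⟨n, rfl⟩
    rw [hKf n]
    refine le_trans (hJ'vol n) (ENNReal.ofReal_le_ofReal ?_)
    have hnat : (f n : ℝ) + 2 ≤ ((n:ℝ) + 2)^r := by
      have h1 : f n + 2 ≤ (n+2)^r := le_trans (by linarith [hfub n]) (mln_key C n)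
      calc (f n : ℝ) + 2 = ((f n + 2 : ℕ) : ℝ) := by push_cast; ring
        _ ≤ (((n+2)^r : ℕ) : ℝ) := Nat.cast_le.mpr h1
        _ = ((n:ℝ) + 2)^r := by push_cast; ring
    have hlog : Real.log ((f n : ℝ) + 2) ≤ (r:ℝ) * Real.log ((n:ℝ) + 2) := by
      rw [← Real.log_pow]
      exact Real.log_le_log (by positivity) hnat
    calc (ε ^ r) ^ Real.log ((n:ℝ) + 2)
        = ε ^ ((r:ℝ) * Real.log ((n:ℝ) + 2)) := by
          rw [← Real.rpow_natCast ε r, ← Real.rpow_mul hε0.le]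
      _ ≤ ε ^ Real.log ((f n : ℝ) + 2) :=
          Real.rpow_le_rpow_of_exponent_ge hε0 hε1.le hlog
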